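/- Let (F ∪ W, ⊐, h, ≻) be a matching game induced by a stable matching rule h on a many-to-many matching market in which every agent's preference is substitutable and satisfies the law of aggregate demand (LAD). Then every agent a ∈ F ∪ W satisfies the manipulability property: if h(≻)(a) ≠ μ_X(≻)(a) (where X = F if a ∈ F and X = W if a ∈ W), then there exists a preference ≻'_a such that h(≻_{-a}, ≻'_a)(a) ≻_a h(≻)(a). -/
import Mathlib


/-!
Common framework for many-to-many matching markets (Manasero–Oviedo,
"General Manipulability Theorem for a Matching Model").

Agents on each side have strict linear orders (strict total orders) over
finsets of the other side.  `Pref.Ch` is the choice function, selecting the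
most preferred subset.
-/

/-- A strict preference of an agent over subsets of the (finite) set `α` of
potential partners: a strict total order on `Finset α`, where `gt S T` means
`S` is strictly preferred to `T`. -/
structure Pref (α : Type*) [DecidableEq α] [Fintype α] where
  gt : Finset α → Finset α → Prop
  isSTO : IsStrictTotalOrder (Finset α) gt

namespace Pref

variable {α : Type*} [DecidableEq α] [Fintype α]

/-- The choice set `Ch(S, ≻)`: the `≻`-maximal subset of `S`. -/
noncomputable def Ch (p : Pref α) (S : Finset α) : Finset α := by
  classical
  haveI := p.isSTO
  haveI : IsStrictTotalOrder (Finset α) (Function.swap p.gt) := IsStrictTotalOrder.swap _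
  exact @Finset.max' _ (linearOrderOfSTO (Function.swap p.gt)) S.powerset
    ⟨∅, Finset.empty_mem_powerset S⟩

/-- Substitutability: if `w ∈ Ch(S)` then `w ∈ Ch(S \ {w'})` for any other `w' ∈ S`. -/
def Substitutable (p : Pref α) : Prop :=
  ∀ (S : Finset α) (w w' : α), w ∈ S → w' ∈ S → w ≠ w' →
    w ∈ p.Ch S → w ∈ p.Ch (S.erase w')

/-- Law of aggregate demand: `Y ⊆ X` implies `|Ch(Y)| ≤ |Ch(X)|`. -/
def LAD (p : Pref α) : Prop :=
  ∀ Y X : Finset α, Y ⊆ X → (p.Ch Y).card ≤ (p.Ch X).card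

/-- `p.HasList L` : the sets in `L` are exactly the acceptable sets, in strictly
decreasing order of preference and all preferred to `∅`; any set not in the
list (other than `∅`) is unacceptable, i.e. worse than `∅`. -/
def HasList (p : Pref α) (L : List (Finset α)) : Prop :=
  List.Chain' p.gt (L ++ [∅]) ∧ ∀ S : Finset α, S ∉ L → S ≠ ∅ → p.gt ∅ S

/-- `q`-separability of a preference with quota `q`. -/
def QSeparable (p : Pref α) (q : ℕ) : Prop :=
  (∀ S : Finset α, q < S.card → p.gt ∅ S) ∧
  (∀ (S : Finset α) (v : α), v ∉ S → S.card < q → (p.gt (insert v S) S ↔ p.gt {v} ∅))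

end Pref

/-- `p'` is the restriction `p |_T` of `p` to `T`:
(i) any set not contained in `T` is worse than `∅`;
(ii) for `S ⊆ T`, `S ≻' ∅ ↔ S ≻ ∅`;
(iii) for `S, S' ⊆ T`, `S ≻' S' ↔ S ≻ S'`. -/
def IsRestriction {α : Type*} [DecidableEq α] [Fintype α]
    (p : Pref α) (T : Finset α) (p' : Pref α) : Prop :=
  (∀ S : Finset α, ¬ S ⊆ T → p'.gt ∅ S) ∧
  (∀ S : Finset α, S ⊆ T → (p'.gt S ∅ ↔ p.gt S ∅)) ∧
  (∀ S S' : Finset α, S ⊆ T → S' ⊆ T → (p'.gt S S' ↔ p.gt S S'))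

variable (F W : Type*) [DecidableEq F] [Fintype F] [DecidableEq W] [Fintype W]

/-- A (many-to-many) matching between firms `F` and workers `W`. -/
structure Matching where
  fm : F → Finset W
  wm : W → Finset F
  compat : ∀ f w, w ∈ fm f ↔ f ∈ wm w

/-- A preference profile: one preference for each firm and each worker. -/
structure Profile where
  fp : F → Pref W
  wp : W → Pref F

variable {F W}

/-- All agents' preferences are substitutable. -/
def Profile.Substitutable (P : Profile F W) : Prop :=
  (∀ f, (P.fp f).Substitutable) ∧ (∀ w, (P.wp w).Substitutable)

/-- All agents' preferences satisfy the law of aggregate demand. -/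
def Profile.LAD (P : Profile F W) : Prop :=
  (∀ f, (P.fp f).LAD) ∧ (∀ w, (P.wp w).LAD)

/-- The profile obtained from `P` by replacing firm `f`'s preference by `p`. -/
def Profile.updateFirm (P : Profile F W) (f : F) (p : Pref W) : Profile F W :=
  ⟨Function.update P.fp f p, P.wp⟩

/-- The profile obtained from `P` by replacing worker `w`'s preference by `p`. -/
def Profile.updateWorker (P : Profile F W) (w : W) (p : Pref F) : Profile F W :=
  ⟨P.fp, Function.update P.wp w p⟩

/-- Individual rationality: every agent chooses its whole assignment. -/
def IndRational (P : Profile F W) (μ : Matching F W) : Prop :=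
  (∀ f, (P.fp f).Ch (μ.fm f) = μ.fm f) ∧ (∀ w, (P.wp w).Ch (μ.wm w) = μ.wm w)

/-- The pair `(w, f)` blocks the matching `μ`. -/
def Blocks (P : Profile F W) (μ : Matching F W) (w : W) (f : F) : Prop :=
  w ∉ μ.fm f ∧ w ∈ (P.fp f).Ch (insert w (μ.fm f)) ∧ f ∈ (P.wp w).Ch (insert f (μ.wm w))

/-- (Pairwise) stability. -/
def Stable (P : Profile F W) (μ : Matching F W) : Prop :=
  IndRational P μ ∧ ∀ w f, ¬ Blocks P μ w f

/-- `μF` is the firm-optimal stable matching for `P`. -/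
def FirmOptimal (P : Profile F W) (μF : Matching F W) : Prop :=
  Stable P μF ∧ ∀ μ, Stable P μ → ∀ f, μF.fm f = μ.fm f ∨ (P.fp f).gt (μF.fm f) (μ.fm f)

/-- `μW` is the worker-optimal stable matching for `P`. -/
def WorkerOptimal (P : Profile F W) (μW : Matching F W) : Prop :=
  Stable P μW ∧ ∀ μ, Stable P μ → ∀ w, μW.wm w = μ.wm w ∨ (P.wp w).gt (μW.wm w) (μ.wm w)

/-- Firm `f` satisfies the manipulability property (w.r.t. the rule `h`, the true
profile `P` and the firm-optimal stable matching `μF`): if `h(≻)(f) ≠ μF(≻)(f)`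
then some report `≻'_f` (in the domain: substitutable and LAD) gives `f` a
strictly `≻_f`-better assignment. -/
def FirmManip (h : Profile F W → Matching F W) (P : Profile F W)
    (μF : Matching F W) (f : F) : Prop :=
  (h P).fm f ≠ μF.fm f → ∃ p' : Pref W, p'.Substitutable ∧ p'.LAD ∧
    (P.fp f).gt ((h (P.updateFirm f p')).fm f) ((h P).fm f)

/-- Firm `f` satisfies the manipulability property with Blair order. -/
def FirmManipB (h : Profile F W → Matching F W) (P : Profile F W)
    (μF : Matching F W) (f : F) : Prop :=
  (h P).fm f ≠ μF.fm f → ∃ p' : Pref W, p'.Substitutable ∧ p'.LAD ∧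
    ((P.fp f).Ch ((h (P.updateFirm f p')).fm f ∪ (h P).fm f) = (h (P.updateFirm f p')).fm f ∧
      (h (P.updateFirm f p')).fm f ≠ (h P).fm f)

/-- Worker `w` satisfies the manipulability property. -/
def WorkerManip (h : Profile F W → Matching F W) (P : Profile F W)
    (μW : Matching F W) (w : W) : Prop :=
  (h P).wm w ≠ μW.wm w → ∃ p' : Pref F, p'.Substitutable ∧ p'.LAD ∧
    (P.wp w).gt ((h (P.updateWorker w p')).wm w) ((h P).wm w)

/-- Worker `w` satisfies the manipulability property with Blair order. -/
def WorkerManipB (h : Profile F W → Matching F W) (P : Profile F W)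
    (μW : Matching F W) (w : W) : Prop :=
  (h P).wm w ≠ μW.wm w → ∃ p' : Pref F, p'.Substitutable ∧ p'.LAD ∧
    ((P.wp w).Ch ((h (P.updateWorker w p')).wm w ∪ (h P).wm w) = (h (P.updateWorker w p')).wm w ∧
      (h (P.updateWorker w p')).wm w ≠ (h P).wm w)


/-! ### Auxiliary development -/

namespace Pref

variable {α : Type*} [DecidableEq α] [Fintype α]

theorem ch_spec (p : Pref α) (S : Finset α) :
    p.Ch S ⊆ S ∧ ∀ A ⊆ S, A ≠ p.Ch S → p.gt (p.Ch S) A := by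
  classical
  haveI := p.isSTO
  haveI : IsStrictTotalOrder (Finset α) (Function.swap p.gt) := IsStrictTotalOrder.swap _
  letI LO := linearOrderOfSTO (Function.swap p.gt)
  have hCh : p.Ch S = @Finset.max' _ LO S.powerset ⟨∅, Finset.empty_mem_powerset S⟩ := rfl
  constructor
  · rw [hCh]
    exact Finset.mem_powerset.mp (@Finset.max'_mem _ LO _ _)
  · intro A hA hne
    have hle : @LE.le _ LO.toLE A (p.Ch S) := by
      rw [hCh]
      exact @Finset.le_max' _ LO _ A (Finset.mem_powerset.mpr hA)
    have hle' : A = p.Ch S ∨ p.gt (p.Ch S) A := hle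
    exact hle'.resolve_left hne

theorem ch_subset (p : Pref α) (S : Finset α) : p.Ch S ⊆ S := (p.ch_spec S).1

theorem ch_eq_of (p : Pref α) {S A : Finset α} (hA : A ⊆ S)
    (h : ∀ B ⊆ S, B ≠ A → p.gt A B) : p.Ch S = A := by
  haveI := p.isSTO
  by_contra hne
  have h1 := (p.ch_spec S).2 A hA (fun e => hne e.symm)
  have h2 := h (p.Ch S) (p.ch_spec S).1 hne
  exact absurd (trans_of p.gt h2 h1) (irrefl_of p.gt A)

theorem mem_ch_of_subset {p : Pref α} (hp : p.Substitutable) (S S' : Finset α)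
    (hss : S' ⊆ S) (w : α) (hw : w ∈ S') (h : w ∈ p.Ch S) : w ∈ p.Ch S' := by
  classical
  have key : ∀ (n : ℕ) (S : Finset α), S' ⊆ S → w ∈ p.Ch S → (S \ S').card = n →
      w ∈ p.Ch S' := by
    intro n
    induction n with
    | zero =>
      intro S hss h hcard
      have hsd : S \ S' = ∅ := Finset.card_eq_zero.mp hcard
      have : S = S' :=
        Finset.Subset.antisymm (Finset.sdiff_eq_empty_iff_subset.mp hsd) hss
      rwa [this] at h
    | succ n ih =>
      intro S hss h hcard
      have hne : (S \ S').Nonempty := by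
        rw [← Finset.card_pos, hcard]; omega
      obtain ⟨w', hw'⟩ := hne
      rw [Finset.mem_sdiff] at hw'
      have hww' : w ≠ w' := fun e => hw'.2 (e ▸ hw)
      have h2 : w ∈ p.Ch (S.erase w') := hp S w w' (hss hw) hw'.1 hww' h
      refine ih (S.erase w') ?_ h2 ?_
      · intro x hx
        exact Finset.mem_erase.mpr ⟨fun e => hw'.2 (e ▸ hx), hss hx⟩
      · rw [Finset.erase_sdiff_comm, Finset.card_erase_of_mem, hcard]
        · rfl
        · exact Finset.mem_sdiff.mpr hw'
  exact key _ S hss h rfl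

/-- The restriction of `p` to subsets of `T`: all subsets of `T` keep their
relative order, and every set not contained in `T` is pushed below all
subsets of `T` (keeping the `p`-order among such sets). -/
def restrict (p : Pref α) (T : Finset α) : Pref α where
  gt S S' := (S ⊆ T ∧ ¬S' ⊆ T) ∨ (S ⊆ T ∧ S' ⊆ T ∧ p.gt S S') ∨
    (¬S ⊆ T ∧ ¬S' ⊆ T ∧ p.gt S S')
  isSTO := by
    haveI := p.isSTO
    refine { trichotomous := ?_, irrefl := ?_, trans := ?_ }
    · intro S S'
      rcases trichotomous_of p.gt S S' with hg | rfl | hg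
      · by_cases h1 : S ⊆ T <;> by_cases h2 : S' ⊆ T <;> tauto
      · tauto
      · by_cases h1 : S ⊆ T <;> by_cases h2 : S' ⊆ T <;> tauto
    · intro S hS
      rcases hS with ⟨h1, h2⟩ | ⟨h1, h2, hg⟩ | ⟨h1, h2, hg⟩
      · exact h2 h1
      · exact absurd hg (irrefl_of p.gt S)
      · exact absurd hg (irrefl_of p.gt S)
    · intro a b c hab hbc
      rcases hab with ⟨ha, hb⟩ | ⟨ha, hb, hg⟩ | ⟨ha, hb, hg⟩ <;>
        rcases hbc with ⟨hb', hc⟩ | ⟨hb', hc, hg'⟩ | ⟨hb', hc, hg'⟩ <;>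
        first
          | exact absurd hb' hb
          | exact absurd hb hb'
          | exact Or.inl ⟨ha, hc⟩
          | exact Or.inr (Or.inl ⟨ha, hc, trans_of p.gt hg hg'⟩)
          | exact Or.inr (Or.inr ⟨ha, hc, trans_of p.gt hg hg'⟩)

theorem ch_restrict (p : Pref α) (T S : Finset α) :
    (p.restrict T).Ch S = p.Ch (S ∩ T) := by
  apply (p.restrict T).ch_eq_of
  · exact (p.ch_subset (S ∩ T)).trans Finset.inter_subset_left
  · intro B hB hne
    have hAT : p.Ch (S ∩ T) ⊆ T := (p.ch_subset (S ∩ T)).trans Finset.inter_subset_right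
    by_cases hBT : B ⊆ T
    · exact Or.inr (Or.inl ⟨hAT, hBT,
        (p.ch_spec (S ∩ T)).2 B (Finset.subset_inter hB hBT) hne⟩)
    · exact Or.inl ⟨hAT, hBT⟩

theorem restrict_substitutable {p : Pref α} (hp : p.Substitutable) (T : Finset α) :
    (p.restrict T).Substitutable := by
  intro S w w' hw hw' hne hmem
  rw [ch_restrict] at hmem ⊢
  rw [Finset.erase_inter]
  by_cases hw'T : w' ∈ S ∩ T
  · exact hp (S ∩ T) w w' (p.ch_subset _ hmem) hw'T hne hmem
  · rw [Finset.erase_eq_of_notMem hw'T]; exact hmem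

theorem restrict_lad {p : Pref α} (hp : p.LAD) (T : Finset α) : (p.restrict T).LAD := by
  intro Y X hYX
  rw [ch_restrict, ch_restrict]
  exact hp _ _ (Finset.inter_subset_inter hYX (Finset.Subset.refl T))

end Pref

section Market

variable {F W : Type*} [DecidableEq F] [Fintype F] [DecidableEq W] [Fintype W]

theorem sum_ite_card {β : Type*} [DecidableEq β] [Fintype β] (s : Finset β) :
    (∑ b : β, if b ∈ s then 1 else 0) = s.card := by
  simp

theorem Matching.sum_card (μ : Matching F W) :
    ∑ f, (μ.fm f).card = ∑ w, (μ.wm w).card := by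
  calc ∑ f, (μ.fm f).card = ∑ f, ∑ w, if w ∈ μ.fm f then 1 else 0 :=
        Finset.sum_congr rfl fun f _ => (sum_ite_card _).symm
    _ = ∑ w, ∑ f, if f ∈ μ.wm w then 1 else 0 := by
        rw [Finset.sum_comm]
        exact Finset.sum_congr rfl fun w _ => Finset.sum_congr rfl fun f _ =>
          if_congr (μ.compat f w) rfl rfl
    _ = ∑ w, (μ.wm w).card := Finset.sum_congr rfl fun w _ => sum_ite_card _

/-- Rural hospitals / invariance theorem: with substitutable preferences
satisfying LAD, every firm is assigned sets of the same cardinality in any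
two stable matchings. -/
theorem rural_hospitals (P : Profile F W) (hsub : P.Substitutable) (hlad : P.LAD)
    {μ ν : Matching F W} (hμ : Stable P μ) (hν : Stable P ν) (f : F) :
    (μ.fm f).card = (ν.fm f).card := by
  classical
  set C : F → Finset W := fun g => (P.fp g).Ch (μ.fm g ∪ ν.fm g) with hC
  set D : W → Finset F := fun w => (P.wp w).Ch (μ.wm w ∪ ν.wm w) with hD
  have key : ∀ κ : Matching F W, Stable P κ →
      (∀ g, κ.fm g ⊆ μ.fm g ∪ ν.fm g) → (∀ v, κ.wm v ⊆ μ.wm v ∪ ν.wm v) →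
      ∀ g w, w ∈ C g → g ∈ D w → w ∈ κ.fm g := by
    intro κ hκ hfm hwm g w hwC hgD
    by_contra hnot
    have h2 : w ∈ (P.fp g).Ch (insert w (κ.fm g)) :=
      Pref.mem_ch_of_subset (hsub.1 g) _ _
        (Finset.insert_subset ((P.fp g).ch_subset _ hwC) (hfm g)) w
        (Finset.mem_insert_self _ _) hwC
    have h4 : g ∈ (P.wp w).Ch (insert g (κ.wm w)) :=
      Pref.mem_ch_of_subset (hsub.2 w) _ _
        (Finset.insert_subset ((P.wp w).ch_subset _ hgD) (hwm w)) g
        (Finset.mem_insert_self _ _) hgD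
    exact hκ.2 w g ⟨hnot, h2, h4⟩
  have lemB : ∀ g w, w ∈ C g → g ∈ D w → w ∈ μ.fm g ∧ w ∈ ν.fm g := fun g w h1 h2 =>
    ⟨key μ hμ (fun _ => Finset.subset_union_left) (fun _ => Finset.subset_union_left) g w h1 h2,
     key ν hν (fun _ => Finset.subset_union_right) (fun _ => Finset.subset_union_right) g w h1 h2⟩
  have hCμ : ∀ g, (μ.fm g).card ≤ (C g).card := fun g => by
    have := hlad.1 g (μ.fm g) (μ.fm g ∪ ν.fm g) Finset.subset_union_left
    rwa [hμ.1.1 g] at this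
  have hCν : ∀ g, (ν.fm g).card ≤ (C g).card := fun g => by
    have := hlad.1 g (ν.fm g) (μ.fm g ∪ ν.fm g) Finset.subset_union_right
    rwa [hν.1.1 g] at this
  have hDμ : ∀ w, (μ.wm w).card ≤ (D w).card := fun w => by
    have := hlad.2 w (μ.wm w) (μ.wm w ∪ ν.wm w) Finset.subset_union_left
    rwa [hμ.1.2 w] at this
  have hDν : ∀ w, (ν.wm w).card ≤ (D w).card := fun w => by
    have := hlad.2 w (ν.wm w) (μ.wm w ∪ ν.wm w) Finset.subset_union_right
    rwa [hν.1.2 w] at this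
  have pointwise : ∀ g w, ((if w ∈ C g then 1 else 0) + (if g ∈ D w then 1 else 0) : ℕ)
      ≤ (if w ∈ μ.fm g then 1 else 0) + (if w ∈ ν.fm g then 1 else 0) := by
    intro g w
    by_cases hx : w ∈ C g <;> by_cases hy : g ∈ D w
    · obtain ⟨h1, h2⟩ := lemB g w hx hy
      simp [hx, hy, h1, h2]
    · have hu := (P.fp g).ch_subset _ hx
      rw [if_pos hx, if_neg hy]
      rcases Finset.mem_union.mp hu with h | h
      · rw [if_pos h]; simpa using Nat.le_add_right 1 _
      · rw [if_pos h]; simpa using Nat.le_add_left 1 _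
    · have hu := (P.wp w).ch_subset _ hy
      rw [if_neg hx, if_pos hy]
      rcases Finset.mem_union.mp hu with h | h
      · rw [if_pos ((μ.compat g w).mpr h)]; simpa using Nat.le_add_right 1 _
      · rw [if_pos ((ν.compat g w).mpr h)]; simpa using Nat.le_add_left 1 _
    · simp [hx, hy]
  have big : (∑ g : F, ∑ w : W, ((if w ∈ C g then 1 else 0) + (if g ∈ D w then 1 else 0)))
      ≤ ∑ g : F, ∑ w : W, ((if w ∈ μ.fm g then 1 else 0) + (if w ∈ ν.fm g then 1 else 0)) :=
    Finset.sum_le_sum fun g _ => Finset.sum_le_sum fun w _ => pointwise g w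
  simp only [Finset.sum_add_distrib] at big
  have e1 : ∑ g : F, ∑ w : W, (if w ∈ C g then 1 else 0) = ∑ g : F, (C g).card :=
    Finset.sum_congr rfl fun g _ => sum_ite_card _
  have e2 : ∑ g : F, ∑ w : W, (if g ∈ D w then 1 else 0) = ∑ w : W, (D w).card := by
    rw [Finset.sum_comm]
    exact Finset.sum_congr rfl fun w _ => sum_ite_card _
  have e3 : ∑ g : F, ∑ w : W, (if w ∈ μ.fm g then 1 else 0) = ∑ g : F, (μ.fm g).card :=
    Finset.sum_congr rfl fun g _ => sum_ite_card _
  have e4 : ∑ g : F, ∑ w : W, (if w ∈ ν.fm g then 1 else 0) = ∑ g : F, (ν.fm g).card :=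
    Finset.sum_congr rfl fun g _ => sum_ite_card _
  rw [e1, e2, e3, e4] at big
  have t1 := μ.sum_card
  have t2 := ν.sum_card
  have b1 : ∑ g : F, (μ.fm g).card ≤ ∑ g : F, (C g).card := Finset.sum_le_sum fun g _ => hCμ g
  have b2 : ∑ g : F, (ν.fm g).card ≤ ∑ g : F, (C g).card := Finset.sum_le_sum fun g _ => hCν g
  have b3 : ∑ w : W, (μ.wm w).card ≤ ∑ w : W, (D w).card := Finset.sum_le_sum fun w _ => hDμ w
  have b4 : ∑ w : W, (ν.wm w).card ≤ ∑ w : W, (D w).card := Finset.sum_le_sum fun w _ => hDν w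
  have hCμsum : ∑ g : F, (μ.fm g).card = ∑ g : F, (C g).card := by omega
  have hCνsum : ∑ g : F, (ν.fm g).card = ∑ g : F, (C g).card := by omega
  have pμ := (Finset.sum_eq_sum_iff_of_le fun g _ => hCμ g).mp hCμsum
  have pν := (Finset.sum_eq_sum_iff_of_le fun g _ => hCν g).mp hCνsum
  exact (pμ f (Finset.mem_univ f)).trans (pν f (Finset.mem_univ f)).symm

/-- The main (firm-side) manipulation lemma. -/
theorem firm_manip_main (P : Profile F W) (hsub : P.Substitutable) (hlad : P.LAD)
    (h : Profile F W → Matching F W)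
    (hrule : ∀ P' : Profile F W, P'.Substitutable → P'.LAD → Stable P' (h P'))
    (μF : Matching F W) (hF : FirmOptimal P μF) (f : F) : FirmManip h P μF f := by
  classical
  intro hne
  set p : Pref W := P.fp f with hp
  set T : Finset W := μF.fm f with hT
  refine ⟨p.restrict T, Pref.restrict_substitutable (hsub.1 f) T,
    Pref.restrict_lad (hlad.1 f) T, ?_⟩
  set P' : Profile F W := P.updateFirm f (p.restrict T) with hP'
  have hfp' : P'.fp f = p.restrict T := Function.update_self f _ _
  have hfpg : ∀ g, g ≠ f → P'.fp g = P.fp g := fun g hg => Function.update_of_ne hg _ _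
  have hsub' : P'.Substitutable := by
    constructor
    · intro g
      by_cases hg : g = f
      · subst hg; rw [hfp']; exact Pref.restrict_substitutable (hsub.1 g) T
      · rw [hfpg g hg]; exact hsub.1 g
    · exact hsub.2
  have hlad' : P'.LAD := by
    constructor
    · intro g
      by_cases hg : g = f
      · subst hg; rw [hfp']; exact Pref.restrict_lad (hlad.1 g) T
      · rw [hfpg g hg]; exact hlad.1 g
    · exact hlad.2
  have hμF' : Stable P' μF := by
    refine ⟨⟨?_, hF.1.1.2⟩, ?_⟩
    · intro g
      by_cases hg : g = f
      · subst hg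
        rw [hfp', Pref.ch_restrict, Finset.inter_self]
        exact hF.1.1.1 g
      · rw [hfpg g hg]; exact hF.1.1.1 g
    · intro w g hb
      by_cases hg : g = f
      · subst hg
        obtain ⟨hb1, hb2, hb3⟩ := hb
        rw [hfp', Pref.ch_restrict,
          Finset.insert_inter_of_notMem hb1, Finset.inter_self] at hb2
        exact hb1 ((p.ch_subset T) hb2)
      · exact hF.1.2 w g ⟨hb.1, by rw [← hfpg g hg]; exact hb.2.1, hb.2.2⟩
  have hν := hrule P' hsub' hlad'
  have hsubT : (h P').fm f ⊆ T := by
    have hIR : (P'.fp f).Ch ((h P').fm f) = (h P').fm f := hν.1.1 f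
    rw [hfp', Pref.ch_restrict] at hIR
    rw [← hIR]
    exact (p.ch_subset _).trans Finset.inter_subset_right
  have hc : T.card = ((h P').fm f).card := rural_hospitals P' hsub' hlad' hμF' hν f
  have hfmT : (h P').fm f = T := Finset.eq_of_subset_of_card_le hsubT (le_of_eq hc)
  rw [hfmT]
  rcases hF.2 (h P) (hrule P hsub hlad) f with he | hgt
  · exact absurd he.symm hne
  · exact hgt

/-- Transpose a matching (swap the roles of firms and workers). -/
def Matching.transpose (μ : Matching F W) : Matching W F :=
  ⟨μ.wm, μ.fm, fun w f => (μ.compat f w).symm⟩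

/-- Transpose a profile (swap the roles of firms and workers). -/
def Profile.transpose (P : Profile F W) : Profile W F := ⟨P.wp, P.fp⟩

theorem Stable.transpose {P : Profile F W} {μ : Matching F W} (hs : Stable P μ) :
    Stable P.transpose μ.transpose := by
  obtain ⟨⟨h1, h2⟩, h3⟩ := hs
  refine ⟨⟨h2, h1⟩, ?_⟩
  intro f w hb
  exact h3 w f ⟨fun hmem => hb.1 ((μ.compat f w).mp hmem), hb.2.2, hb.2.1⟩

end Market

/-- Corollary of the General Manipulability Theorem.  In the
matching game induced by a stable matching rule `h` on a market with substitutable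
and LAD preferences, every agent satisfies the manipulability property: if
`h(≻)(a) ≠ μ_X(≻)(a)`, then there exists a report `≻'_a` with
`h(≻_{-a}, ≻'_a)(a) ≻_a h(≻)(a)`. -/
theorem stmt6 {F W : Type*} [DecidableEq F] [Fintype F] [DecidableEq W] [Fintype W]
    (P : Profile F W) (hsub : P.Substitutable) (hlad : P.LAD)
    (h : Profile F W → Matching F W)
    (hrule : ∀ P' : Profile F W, P'.Substitutable → P'.LAD → Stable P' (h P'))
    (μF μW : Matching F W) (hF : FirmOptimal P μF) (hW : WorkerOptimal P μW) :
    (∀ f : F, FirmManip h P μF f) ∧ (∀ w : W, WorkerManip h P μW w) := by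
  constructor
  · exact fun f => firm_manip_main P hsub hlad h hrule μF hF f
  · intro w
    have hFopt : FirmOptimal P.transpose μW.transpose := by
      refine ⟨hW.1.transpose, ?_⟩
      intro μ' hμ' w'
      exact hW.2 μ'.transpose hμ'.transpose w'
    have hmain := firm_manip_main P.transpose ⟨hsub.2, hsub.1⟩ ⟨hlad.2, hlad.1⟩
      (fun Q => (h Q.transpose).transpose)
      (fun Q hQs hQl => (hrule Q.transpose ⟨hQs.2, hQs.1⟩ ⟨hQl.2, hQl.1⟩).transpose)
      μW.transpose hFopt w
    intro hne
    obtain ⟨p', hs', hl', hgt⟩ := hmain hne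
    exact ⟨p', hs', hl', hgt⟩
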